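/- arXiv:2402.12304 — 4 statements merged into one kernel-verified Lean document; each statement's English description precedes it below -/
import Mathlib

section
/- Stability of the Newton step (second half of Lemma 3.1): suppose α := Mν⁻²‖f‖ < 1, û ∈ V satisfies ‖û‖ ≤ ν⁻¹‖f‖, and u' ∈ V is a Newton update of û, i.e. ν⟨u',v⟩ + b(û,u',v) + b(u',û,v) − b(û,û,v) = f(v) for all v ∈ V. Then ‖u'‖ ≤ ν⁻¹(1+α)(1−α)⁻¹‖f‖. -/
open scoped RealInnerProductSpace

/-!
Testing the Newton equation with `u'` itself removes `b(û, u', u')` by skew-symmetry, and the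
trilinear bound turns the remaining identity into `(ν - M‖û‖)‖u'‖ ≤ ‖f‖ + M‖û‖²`. The bound
`‖û‖ ≤ ν⁻¹‖f‖` makes the left coefficient at least `(1 - α)ν > 0` and the right side at most
`(1 + α)‖f‖`.
-/

section NewtonStep

variable {V : Type*} [NormedAddCommGroup V] [InnerProductSpace ℝ V]
  (b : V →ₗ[ℝ] V →ₗ[ℝ] V →ₗ[ℝ] ℝ)

theorem newton_update_energy_eq (hskew : ∀ z w : V, b z w w = 0) {g : V → ℝ} {ν : ℝ}
    {uhat u' : V}
    (hNewton : ∀ v : V, ν * ⟪u', v⟫ + b uhat u' v + b u' uhat v - b uhat uhat v = g v) :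
    ν * ‖u'‖ ^ 2 = g u' - b u' uhat u' + b uhat uhat u' := by
  have h := hNewton u'
  rw [hskew, real_inner_self_eq_norm_sq] at h
  linarith

theorem newton_update_energy_le (hskew : ∀ z w : V, b z w w = 0) {M : ℝ} (hM : 0 ≤ M)
    (hbound : ∀ z w v : V, |b z w v| ≤ M * ‖z‖ * ‖w‖ * ‖v‖) (f : V →L[ℝ] ℝ) {ν : ℝ}
    {uhat u' : V}
    (hNewton : ∀ v : V, ν * ⟪u', v⟫ + b uhat u' v + b u' uhat v - b uhat uhat v = f v) :
    (ν - M * ‖uhat‖) * ‖u'‖ ≤ ‖f‖ + M * ‖uhat‖ ^ 2 := by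
  rcases (norm_nonneg u').eq_or_lt with hzero | hpos
  · rw [← hzero, mul_zero]
    positivity
  have hf : f u' ≤ ‖f‖ * ‖u'‖ := (le_abs_self _).trans (f.le_opNorm u')
  have hb₁ : -b u' uhat u' ≤ M * ‖u'‖ * ‖uhat‖ * ‖u'‖ :=
    (neg_le_abs _).trans (hbound u' uhat u')
  have hb₂ : b uhat uhat u' ≤ M * ‖uhat‖ * ‖uhat‖ * ‖u'‖ :=
    (le_abs_self _).trans (hbound uhat uhat u')
  refine le_of_mul_le_mul_left ?_ hpos
  have henergy := newton_update_energy_eq b hskew hNewton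
  linarith

end NewtonStep

/-- Stability of the Newton step: if `α := Mν⁻²‖f‖ < 1`, `‖uhat‖ ≤ ν⁻¹‖f‖`, and
`u'` is a Newton update of `uhat`, then `‖u'‖ ≤ ν⁻¹(1+α)(1−α)⁻¹‖f‖`. -/
theorem newton_step_stability
    {V : Type*} [NormedAddCommGroup V] [InnerProductSpace ℝ V]
    (b : V →ₗ[ℝ] V →ₗ[ℝ] V →ₗ[ℝ] ℝ)
    (hskew : ∀ z w : V, b z w w = 0)
    (M : ℝ) (hM : 0 < M)
    (hbound : ∀ z w v : V, |b z w v| ≤ M * ‖z‖ * ‖w‖ * ‖v‖)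
    (f : V →L[ℝ] ℝ) (ν : ℝ) (hν : 0 < ν)
    (α : ℝ) (hα : α = M * ν⁻¹ ^ 2 * ‖f‖) (hα1 : α < 1)
    (uhat u' : V)
    (huhatstab : ‖uhat‖ ≤ ν⁻¹ * ‖f‖)
    (hNewton : ∀ v : V, ν * ⟪u', v⟫ + b uhat u' v + b u' uhat v - b uhat uhat v = f v) :
    ‖u'‖ ≤ ν⁻¹ * (1 + α) * (1 - α)⁻¹ * ‖f‖ := by
  have hcoercive : M * ‖uhat‖ ≤ α * ν := by
    calc M * ‖uhat‖ ≤ M * (ν⁻¹ * ‖f‖) := by gcongr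
      _ = α * ν := by rw [hα]; field_simp
  have hforcing : M * ‖uhat‖ ^ 2 ≤ α * ‖f‖ := by
    calc M * ‖uhat‖ ^ 2 ≤ M * (ν⁻¹ * ‖f‖) ^ 2 := by gcongr
      _ = α * ‖f‖ := by rw [hα]; ring
  have hestimate := newton_update_energy_le b hskew hM.le hbound f hNewton
  have hdiv : ν⁻¹ * (1 + α) * (1 - α)⁻¹ * ‖f‖ = (1 + α) * ‖f‖ / ((1 - α) * ν) := by
    field_simp
  rw [hdiv, le_div_iff₀ (mul_pos (sub_pos.mpr hα1) hν)]
  calc ‖u'‖ * ((1 - α) * ν) ≤ (ν - M * ‖uhat‖) * ‖u'‖ := by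
        nlinarith [mul_le_mul_of_nonneg_right hcoercive (norm_nonneg u')]
    _ ≤ ‖f‖ + M * ‖uhat‖ ^ 2 := hestimate
    _ ≤ (1 + α) * ‖f‖ := by linarith
end

section
/- Global stability of the Picard–Newton iteration (Lemma 3.1): assume the uniqueness condition α := Mν⁻²‖f‖ < 1. Let u₀ ∈ V be arbitrary and let (uₖ)ₖ≥₀, (ûₖ)ₖ≥₁ be sequences such that for every k ≥ 0, û_{k+1} is a Picard update of uₖ and u_{k+1} is a Newton update of û_{k+1}. Then for every k ≥ 1, ‖ûₖ‖ ≤ ν⁻¹‖f‖ and ‖uₖ‖ ≤ ν⁻¹(1+α)(1−α)⁻¹‖f‖; in particular the iteration is bounded independently of the initial iterate. -/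
open scoped RealInnerProductSpace

/-!
Testing the Picard equation with `v = û` kills the convection term by skew-symmetry, so
`ν‖û‖² = f û` and `‖û‖ ≤ ν⁻¹‖f‖` whatever the previous iterate was. Testing the Newton equation
with `v = u'` leaves `ν‖u'‖² = f u' - b(u', û, u') + b(û, û, u')`, and the Picard bound on `û`
makes the two remaining convection terms at most `αν‖u'‖²` and `α‖f‖‖u'‖`; absorbing the first
into the left-hand side is possible exactly because `α < 1`.
-/

theorem le_div_of_mul_sq_le_mul {B c d : ℝ} (hB : 0 ≤ B) (hc : 0 < c) (hd : 0 ≤ d)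
    (h : c * B ^ 2 ≤ d * B) : B ≤ d / c := by
  rw [le_div_iff₀ hc]
  rcases hB.eq_or_lt with rfl | hB
  · simpa using hd
  · exact le_of_mul_le_mul_right (by nlinarith) hB

section PicardNewton

variable {V : Type*} [NormedAddCommGroup V] [InnerProductSpace ℝ V]
  (b : V →ₗ[ℝ] V →ₗ[ℝ] V →ₗ[ℝ] ℝ) (f : V →L[ℝ] ℝ) (ν : ℝ)

def IsPicardUpdate (w û : V) : Prop :=
  ∀ v, ν * ⟪û, v⟫ + b w û v = f v

def IsNewtonUpdate (û u' : V) : Prop :=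
  ∀ v, ν * ⟪u', v⟫ + b û u' v + b u' û v - b û û v = f v

variable {b f ν}

theorem norm_le_of_isPicardUpdate (hskew : ∀ z w : V, b z w w = 0) (hν : 0 < ν) {w û : V}
    (h : IsPicardUpdate b f ν w û) : ‖û‖ ≤ ν⁻¹ * ‖f‖ := by
  have energy : ν * ‖û‖ ^ 2 = f û := by
    simpa [hskew, real_inner_self_eq_norm_sq] using h û
  have hf : f û ≤ ‖f‖ * ‖û‖ := (Real.le_norm_self _).trans (f.le_opNorm û)
  rw [← div_eq_inv_mul]
  exact le_div_of_mul_sq_le_mul (norm_nonneg _) hν (norm_nonneg _) (energy.trans_le hf)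

theorem norm_le_of_isNewtonUpdate (hskew : ∀ z w : V, b z w w = 0) {M : ℝ} (hM : 0 ≤ M)
    (hbound : ∀ z w v : V, |b z w v| ≤ M * ‖z‖ * ‖w‖ * ‖v‖) {R : ℝ} (hMR : M * R < ν)
    {û u' : V} (hû : ‖û‖ ≤ R) (h : IsNewtonUpdate b f ν û u') :
    ‖u'‖ ≤ (‖f‖ + M * R ^ 2) / (ν - M * R) := by
  have energy : ν * ‖u'‖ ^ 2 = f u' - b u' û u' + b û û u' := by
    have := h u'
    rw [hskew, add_zero, real_inner_self_eq_norm_sq] at this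
    linarith
  have hf : f u' ≤ ‖f‖ * ‖u'‖ := (Real.le_norm_self _).trans (f.le_opNorm u')
  have hb₁ : -b u' û u' ≤ M * R * ‖u'‖ ^ 2 := by
    have hMû : M * ‖û‖ ≤ M * R := mul_le_mul_of_nonneg_left hû hM
    nlinarith [neg_le_abs (b u' û u'), hbound u' û u', norm_nonneg u']
  have hb₂ : b û û u' ≤ M * R ^ 2 * ‖u'‖ := by
    have hMû : M * ‖û‖ ^ 2 ≤ M * R ^ 2 :=
      mul_le_mul_of_nonneg_left (pow_le_pow_left₀ (norm_nonneg _) hû 2) hM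
    nlinarith [le_abs_self (b û û u'), hbound û û u', norm_nonneg u']
  have hR : 0 ≤ R := (norm_nonneg _).trans hû
  refine le_div_of_mul_sq_le_mul (norm_nonneg _) (by linarith) (by positivity) ?_
  linarith

end PicardNewton

/-- Global stability of the Picard–Newton iteration (Lemma 3.1): under the
uniqueness condition `α := Mν⁻²‖f‖ < 1`, for any initial iterate `u 0`, the
Picard half-steps satisfy `‖uhat k‖ ≤ ν⁻¹‖f‖` and the Newton steps satisfy
`‖u k‖ ≤ ν⁻¹(1+α)(1−α)⁻¹‖f‖` for every `k ≥ 1`. -/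
theorem picard_newton_global_stability
    {V : Type*} [NormedAddCommGroup V] [InnerProductSpace ℝ V]
    (b : V →ₗ[ℝ] V →ₗ[ℝ] V →ₗ[ℝ] ℝ)
    (hskew : ∀ z w : V, b z w w = 0)
    (M : ℝ) (hM : 0 < M)
    (hbound : ∀ z w v : V, |b z w v| ≤ M * ‖z‖ * ‖w‖ * ‖v‖)
    (f : V →L[ℝ] ℝ) (ν : ℝ) (hν : 0 < ν)
    (α : ℝ) (hα : α = M * ν⁻¹ ^ 2 * ‖f‖) (hα1 : α < 1)
    (u uhat : ℕ → V)
    (hPicard : ∀ k : ℕ, ∀ v : V,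
      ν * ⟪uhat (k + 1), v⟫ + b (u k) (uhat (k + 1)) v = f v)
    (hNewton : ∀ k : ℕ, ∀ v : V,
      ν * ⟪u (k + 1), v⟫ + b (uhat (k + 1)) (u (k + 1)) v
        + b (u (k + 1)) (uhat (k + 1)) v - b (uhat (k + 1)) (uhat (k + 1)) v = f v) :
    ∀ k : ℕ, 1 ≤ k →
      ‖uhat k‖ ≤ ν⁻¹ * ‖f‖ ∧ ‖u k‖ ≤ ν⁻¹ * (1 + α) * (1 - α)⁻¹ * ‖f‖ := by
  intro k hk
  obtain ⟨j, rfl⟩ : ∃ j, k = j + 1 := ⟨k - 1, by omega⟩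
  have hPicardBound := norm_le_of_isPicardUpdate hskew hν (hPicard j)
  have hMR : M * (ν⁻¹ * ‖f‖) = α * ν := by rw [hα]; field_simp
  have hMR2 : M * (ν⁻¹ * ‖f‖) ^ 2 = α * ‖f‖ := by rw [hα]; ring
  refine ⟨hPicardBound, ?_⟩
  have hNewtonBound := norm_le_of_isNewtonUpdate hskew hM.le hbound
    (hMR ▸ mul_lt_of_lt_one_left hν hα1) hPicardBound (hNewton j)
  have h1α : 1 - α ≠ 0 := by linarith
  calc ‖u (j + 1)‖ ≤ (‖f‖ + M * (ν⁻¹ * ‖f‖) ^ 2) / (ν - M * (ν⁻¹ * ‖f‖)) := hNewtonBound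
    _ = ν⁻¹ * (1 + α) * (1 - α)⁻¹ * ‖f‖ := by
      rw [hMR, hMR2]; field_simp
end

section
/- Quadratic error reduction of the Newton step under the uniqueness condition: suppose α := Mν⁻²‖f‖ < 1, let u ∈ V be a weak NSE solution, let û ∈ V satisfy ‖û‖ ≤ ν⁻¹‖f‖, and let u' ∈ V be a Newton update of û. Then ‖u − u'‖ ≤ Mν⁻¹(1−α)⁻¹ ‖u − û‖². -/
/-!
Subtracting the Newton equation from the NSE gives, for the error `e = u - u'` and `d = u - uhat`,
`ν⟨e, v⟩ + b(uhat, e, v) + b(e, uhat, v) = -b(d, d, v)`. Testing with `v = e` kills `b(uhat, e, e)`,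
and the bound on `b` together with `‖uhat‖ ≤ ν⁻¹‖f‖` yields `ν (1 - α) ‖e‖² ≤ M ‖d‖² ‖e‖`.
-/

open scoped RealInnerProductSpace

lemma mul_le_of_mul_sq_le_mul {c x K : ℝ} (hx : 0 ≤ x) (hK : 0 ≤ K) (h : c * x ^ 2 ≤ K * x) :
    c * x ≤ K := by
  rcases hx.eq_or_lt with rfl | hx
  · simpa using hK
  · exact le_of_mul_le_mul_right (by linarith [sq x]) hx

section NewtonError

variable {V : Type*} [NormedAddCommGroup V] [InnerProductSpace ℝ V]
  (b : V →ₗ[ℝ] V →ₗ[ℝ] V →ₗ[ℝ] ℝ)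

lemma trilinear_sub_newton_linearization (u uhat u' v : V) :
    b u u v - (b uhat u' v + b u' uhat v - b uhat uhat v)
      = b (u - uhat) (u - uhat) v + b uhat (u - u') v + b (u - u') uhat v := by
  simp only [map_sub, LinearMap.sub_apply]
  ring

variable {b} {ν : ℝ} {f : V →L[ℝ] ℝ} {u uhat u' : V}

lemma newton_error_eq (hNSE : ∀ v : V, ν * ⟪u, v⟫ + b u u v = f v)
    (hNewton : ∀ v : V, ν * ⟪u', v⟫ + b uhat u' v + b u' uhat v - b uhat uhat v = f v) (v : V) :
    ν * ⟪u - u', v⟫ + b uhat (u - u') v + b (u - u') uhat v = -b (u - uhat) (u - uhat) v := by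
  have := trilinear_sub_newton_linearization b u uhat u' v
  rw [inner_sub_left]
  linarith [hNSE v, hNewton v]

lemma newton_error_energy_eq (hskew : ∀ z w : V, b z w w = 0)
    (hNSE : ∀ v : V, ν * ⟪u, v⟫ + b u u v = f v)
    (hNewton : ∀ v : V, ν * ⟪u', v⟫ + b uhat u' v + b u' uhat v - b uhat uhat v = f v) :
    ν * ‖u - u'‖ ^ 2 = -b (u - uhat) (u - uhat) (u - u') - b (u - u') uhat (u - u') := by
  have h := newton_error_eq hNSE hNewton (u - u')
  rw [real_inner_self_eq_norm_sq, hskew] at h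
  linarith

lemma newton_error_energy_le (hskew : ∀ z w : V, b z w w = 0) {M : ℝ}
    (hbound : ∀ z w v : V, |b z w v| ≤ M * ‖z‖ * ‖w‖ * ‖v‖)
    (hNSE : ∀ v : V, ν * ⟪u, v⟫ + b u u v = f v)
    (hNewton : ∀ v : V, ν * ⟪u', v⟫ + b uhat u' v + b u' uhat v - b uhat uhat v = f v) :
    ν * ‖u - u'‖ ^ 2 ≤ M * ‖u - uhat‖ ^ 2 * ‖u - u'‖ + M * ‖uhat‖ * ‖u - u'‖ ^ 2 := by
  rw [newton_error_energy_eq hskew hNSE hNewton]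
  have hd := neg_le_of_abs_le (hbound (u - uhat) (u - uhat) (u - u'))
  have he := neg_le_of_abs_le (hbound (u - u') uhat (u - u'))
  linarith

end NewtonError

/-- Quadratic error reduction of the Newton step under the uniqueness
condition: if `α := Mν⁻²‖f‖ < 1`, `u` is a weak NSE solution,
`‖uhat‖ ≤ ν⁻¹‖f‖`, and `u'` is a Newton update of `uhat`, then
`‖u − u'‖ ≤ Mν⁻¹(1−α)⁻¹‖u − uhat‖²`. -/
theorem newton_step_quadratic_error
    {V : Type*} [NormedAddCommGroup V] [InnerProductSpace ℝ V]
    (b : V →ₗ[ℝ] V →ₗ[ℝ] V →ₗ[ℝ] ℝ)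
    (hskew : ∀ z w : V, b z w w = 0)
    (M : ℝ) (hM : 0 < M)
    (hbound : ∀ z w v : V, |b z w v| ≤ M * ‖z‖ * ‖w‖ * ‖v‖)
    (f : V →L[ℝ] ℝ) (ν : ℝ) (hν : 0 < ν)
    (α : ℝ) (hα : α = M * ν⁻¹ ^ 2 * ‖f‖) (hα1 : α < 1)
    (u uhat u' : V)
    (hNSE : ∀ v : V, ν * ⟪u, v⟫ + b u u v = f v)
    (huhatstab : ‖uhat‖ ≤ ν⁻¹ * ‖f‖)
    (hNewton : ∀ v : V, ν * ⟪u', v⟫ + b uhat u' v + b u' uhat v - b uhat uhat v = f v) :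
    ‖u - u'‖ ≤ M * ν⁻¹ * (1 - α)⁻¹ * ‖u - uhat‖ ^ 2 := by
  have hconv : M * ‖uhat‖ ≤ ν * α := calc
    M * ‖uhat‖ ≤ M * (ν⁻¹ * ‖f‖) := by gcongr
    _ = ν * α := by rw [hα]; field_simp
  have hcoer : 0 < ν * (1 - α) := mul_pos hν (by linarith)
  have henergy : ν * (1 - α) * ‖u - u'‖ ^ 2 ≤ M * ‖u - uhat‖ ^ 2 * ‖u - u'‖ := by
    nlinarith [newton_error_energy_le hskew hbound hNSE hNewton, sq_nonneg ‖u - u'‖]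
  have h := mul_le_of_mul_sq_le_mul (norm_nonneg _) (by positivity) henergy
  rw [show M * ν⁻¹ * (1 - α)⁻¹ * ‖u - uhat‖ ^ 2 = M * ‖u - uhat‖ ^ 2 / (ν * (1 - α)) by
    field_simp, le_div_iff₀ hcoer]
  linarith
end

section
/- One-step error bound near a nonsingular solution (equation (3.16), valid for any α > 0): let u ∈ V be a weak NSE solution that is nonsingular with inf-sup constant δ > 0, let uₖ ∈ V, let û_{k+1} be a Picard update of uₖ, and let u_{k+1} be a Newton update of û_{k+1}. Then, with α := Mν⁻²‖f‖, δ‖u − u_{k+1}‖ ≤ 2Mα‖u − uₖ‖·‖u − u_{k+1}‖ + Mα²‖u − uₖ‖², i.e. (δ − 2Mα‖u − uₖ‖)·‖u − u_{k+1}‖ ≤ Mα²‖u − uₖ‖². -/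
open scoped RealInnerProductSpace

/-- One-step error bound near a nonsingular solution (equation (3.16), valid
for any `α > 0`): if `u` is a nonsingular weak NSE solution with inf-sup
constant `δ > 0`, `uhat` is a Picard update of `uk`, and `u'` is a Newton update
of `uhat`, then `δ‖u − u'‖ ≤ 2Mα‖u − uk‖‖u − u'‖ + Mα²‖u − uk‖²`, i.e.
`(δ − 2Mα‖u − uk‖)‖u − u'‖ ≤ Mα²‖u − uk‖²`. -/
theorem nonsingular_one_step_bound
    {V : Type*} [NormedAddCommGroup V] [InnerProductSpace ℝ V]
    (b : V →ₗ[ℝ] V →ₗ[ℝ] V →ₗ[ℝ] ℝ)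
    (hskew : ∀ z w : V, b z w w = 0)
    (M : ℝ) (hM : 0 < M)
    (hbound : ∀ z w v : V, |b z w v| ≤ M * ‖z‖ * ‖w‖ * ‖v‖)
    (f : V →L[ℝ] ℝ) (ν : ℝ) (hν : 0 < ν)
    (α : ℝ) (hα : α = M * ν⁻¹ ^ 2 * ‖f‖)
    (δ : ℝ) (hδ : 0 < δ)
    (u uk uhat u' : V)
    (hNSE : ∀ v : V, ν * ⟪u, v⟫ + b u u v = f v)
    (hnonsing : ∀ w : V, ∀ c : ℝ, c < δ * ‖w‖ →
      ∃ v : V, v ≠ 0 ∧ c * ‖v‖ < ν * ⟪w, v⟫ + b u w v + b w u v)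
    (hPicard : ∀ v : V, ν * ⟪uhat, v⟫ + b uk uhat v = f v)
    (hNewton : ∀ v : V, ν * ⟪u', v⟫ + b uhat u' v + b u' uhat v - b uhat uhat v = f v) :
    δ * ‖u - u'‖ ≤ 2 * M * α * ‖u - uk‖ * ‖u - u'‖ + M * α ^ 2 * ‖u - uk‖ ^ 2
    ∧ (δ - 2 * M * α * ‖u - uk‖) * ‖u - u'‖ ≤ M * α ^ 2 * ‖u - uk‖ ^ 2 := by
  have hα0 : 0 ≤ α := by
    rw [hα]; positivity
  -- ‖u‖ ≤ ν⁻¹‖f‖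
  have hu : ‖u‖ ≤ ν⁻¹ * ‖f‖ := by
    have h := hNSE u
    rw [hskew u u, real_inner_self_eq_norm_sq] at h
    have hf : f u ≤ ‖f‖ * ‖u‖ := le_trans (le_abs_self _) (f.le_opNorm u)
    rcases eq_or_lt_of_le (norm_nonneg u) with h0 | h0
    · rw [← h0]; positivity
    · rw [inv_mul_eq_div, le_div_iff₀ hν]
      nlinarith
  -- Picard contraction : ‖u - uhat‖ ≤ α ‖u - uk‖
  have hpic : ‖u - uhat‖ ≤ α * ‖u - uk‖ := by
    have h1 := hNSE (u - uhat)
    have h2 := hPicard (u - uhat)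
    have hkey : ν * ⟪u - uhat, u - uhat⟫ + b (u - uk) u (u - uhat)
        + b uk (u - uhat) (u - uhat) = 0 := by
      simp only [inner_sub_left, map_sub, LinearMap.sub_apply] at h1 h2 ⊢
      linarith
    rw [hskew, real_inner_self_eq_norm_sq, add_zero] at hkey
    have hb := hbound (u - uk) u (u - uhat)
    have hb' : -b (u - uk) u (u - uhat) ≤ M * ‖u - uk‖ * ‖u‖ * ‖u - uhat‖ := by
      have := abs_le.mp hb
      linarith [this.1]
    rcases eq_or_lt_of_le (norm_nonneg (u - uhat)) with h0 | h0
    · rw [← h0]; positivity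
    · have h3 : ν * ‖u - uhat‖ ≤ M * ‖u - uk‖ * ‖u‖ := by
        nlinarith
      have h4 : M * ‖u - uk‖ * ‖u‖ ≤ M * ‖u - uk‖ * (ν⁻¹ * ‖f‖) := by
        apply mul_le_mul_of_nonneg_left hu
        positivity
      rw [hα]
      have hν' : ν⁻¹ * ν = 1 := inv_mul_cancel₀ (ne_of_gt hν)
      nlinarith [mul_le_mul_of_nonneg_left (le_trans h3 h4) (le_of_lt (inv_pos.mpr hν))]
  -- key identity for the Newton step error
  have key : ∀ v : V, ν * ⟪u - u', v⟫ + b u (u - u') v + b (u - u') u v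
      = b (u - uhat) (u - u') v + b (u - u') (u - uhat) v - b (u - uhat) (u - uhat) v := by
    intro v
    have h1 := hNSE v
    have h2 := hNewton v
    simp only [inner_sub_left, map_sub, LinearMap.sub_apply] at h1 h2 ⊢
    linarith
  set C : ℝ := M * (2 * ‖u - uhat‖ * ‖u - u'‖ + ‖u - uhat‖ ^ 2) with hC
  -- δ‖u - u'‖ ≤ C via nonsingularity
  have hmain : δ * ‖u - u'‖ ≤ C := by
    by_contra h
    push_neg at h
    obtain ⟨v, hv0, hv⟩ := hnonsing (u - u') C h
    rw [key v] at hv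
    have b1 := abs_le.mp (hbound (u - uhat) (u - u') v)
    have b2 := abs_le.mp (hbound (u - u') (u - uhat) v)
    have b3 := abs_le.mp (hbound (u - uhat) (u - uhat) v)
    have : b (u - uhat) (u - u') v + b (u - u') (u - uhat) v - b (u - uhat) (u - uhat) v
        ≤ C * ‖v‖ := by
      rw [hC]; ring_nf; ring_nf at b1 b2 b3; nlinarith [b1.2, b2.2, b3.1]
    linarith
  have hE : 0 ≤ ‖u - u'‖ := norm_nonneg _
  have hD : 0 ≤ ‖u - uk‖ := norm_nonneg _
  have hfin : δ * ‖u - u'‖ ≤ 2 * M * α * ‖u - uk‖ * ‖u - u'‖ + M * α ^ 2 * ‖u - uk‖ ^ 2 := by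
    have hEh : 0 ≤ ‖u - uhat‖ := norm_nonneg _
    rw [hC] at hmain
    nlinarith [mul_le_mul_of_nonneg_left hpic hEh, mul_le_mul_of_nonneg_left hpic hE,
      mul_le_mul_of_nonneg_right hpic (mul_nonneg hα0 hD)]
  exact ⟨hfin, by nlinarith⟩
end
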